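/- The Gelfand–Fuchs cocycle satisfies the Jacobi-type 2-cocycle condition on vect(S¹): for smooth 2π-periodic u, v, w, ω([u,v], w) + ω([v,w], u) + ω([w,u], v) = 0, where [u,v] = −u v' + u' v and ω(u,v) = ∫₀^{2π} u''' v dx. -/

import Mathlib

open Real intervalIntegral

/-- Bracket of vector fields on the circle: `[u,v] = −u v' + u' v`. -/
noncomputable def vectBracket (u v : ℝ → ℝ) : ℝ → ℝ :=
  fun x => -u x * deriv v x + deriv u x * v x

/-- The Gelfand–Fuchs cocycle `ω(u,v) = ∫₀^{2π} u''' v dx`. -/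
noncomputable def gfCocycle (u v : ℝ → ℝ) : ℝ :=
  ∫ x in (0:ℝ)..(2 * Real.pi), iteratedDeriv 3 u x * v x

private lemma sd {f : ℝ → ℝ} (hf : ContDiff ℝ (⊤ : ℕ∞) f) : ContDiff ℝ (⊤ : ℕ∞) (deriv f) :=
  (contDiff_infty_iff_deriv.mp hf).2

private lemma perd {f : ℝ → ℝ} {c : ℝ} (h : ∀ x, f (x + c) = f x) (x : ℝ) :
    deriv f (x + c) = deriv f x := by
  conv_lhs => rw [← deriv_comp_add_const f c x, funext h]

private lemma hda {f : ℝ → ℝ} (hf : ContDiff ℝ (⊤ : ℕ∞) f) (x : ℝ) : HasDerivAt f (deriv f x) x :=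
  (hf.differentiable (by simp) x).hasDerivAt

private lemma congr' {f : ℝ → ℝ} {a b x : ℝ} (h : HasDerivAt f a x) (e : a = b) :
    HasDerivAt f b x := e ▸ h

private lemma d3_bracket {u v : ℝ → ℝ} (hu : ContDiff ℝ (⊤ : ℕ∞) u) (hv : ContDiff ℝ (⊤ : ℕ∞) v) :
    iteratedDeriv 3 (vectBracket u v) = fun x =>
      deriv (deriv (deriv (deriv u))) x * v x
      + 2 * deriv (deriv (deriv u)) x * deriv v x
      - 2 * deriv u x * deriv (deriv (deriv v)) x
      - u x * deriv (deriv (deriv (deriv v))) x := by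
  have hu1 := sd hu; have hu2 := sd hu1; have hu3 := sd hu2
  have hv1 := sd hv; have hv2 := sd hv1; have hv3 := sd hv2
  have h1 : deriv (vectBracket u v) =
      fun x => deriv (deriv u) x * v x - u x * deriv (deriv v) x := by
    funext y
    have h := ((hda hu y).neg.mul (hda hv1 y)).add ((hda hu1 y).mul (hda hv y))
    exact h.deriv.trans (by simp only [Pi.neg_apply]; ring)
  have h2 : deriv (fun x => deriv (deriv u) x * v x - u x * deriv (deriv v) x) =
      fun x => deriv (deriv (deriv u)) x * v x + deriv (deriv u) x * deriv v x
        - deriv u x * deriv (deriv v) x - u x * deriv (deriv (deriv v)) x := by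
    funext y
    have h := ((hda hu2 y).mul (hda hv y)).sub ((hda hu y).mul (hda hv2 y))
    exact h.deriv.trans (by ring)
  have h3 : deriv (fun x => deriv (deriv (deriv u)) x * v x + deriv (deriv u) x * deriv v x
        - deriv u x * deriv (deriv v) x - u x * deriv (deriv (deriv v)) x) =
      fun x => deriv (deriv (deriv (deriv u))) x * v x
        + 2 * deriv (deriv (deriv u)) x * deriv v x
        - 2 * deriv u x * deriv (deriv (deriv v)) x
        - u x * deriv (deriv (deriv (deriv v))) x := by
    funext y
    have h := ((((hda hu3 y).mul (hda hv y)).add ((hda hu2 y).mul (hda hv1 y))).sub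
      ((hda hu1 y).mul (hda hv2 y))).sub ((hda hu y).mul (hda hv3 y))
    exact h.deriv.trans (by ring)
  rw [show (3:ℕ) = 2 + 1 from rfl, iteratedDeriv_succ, show (2:ℕ) = 1 + 1 from rfl,
    iteratedDeriv_succ, iteratedDeriv_one, h1, h2, h3]

/-- A primitive of the cyclic sum of integrands. -/
private noncomputable def primF (u v w : ℝ → ℝ) : ℝ → ℝ := fun x =>
  2 * (deriv (deriv u) x * deriv v x * w x - deriv u x * deriv (deriv v) x * w x
    + deriv u x * v x * deriv (deriv w) x - u x * deriv v x * deriv (deriv w) x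
    + u x * deriv (deriv v) x * deriv w x - deriv (deriv u) x * v x * deriv w x)

/-- The Gelfand–Fuchs cocycle satisfies the 2-cocycle (Jacobi-type) condition:
`ω([u,v],w) + ω([v,w],u) + ω([w,u],v) = 0`. -/
theorem gelfandFuchs_cocycle (u v w : ℝ → ℝ)
    (hu : ContDiff ℝ (⊤ : ℕ∞) u) (hv : ContDiff ℝ (⊤ : ℕ∞) v) (hw : ContDiff ℝ (⊤ : ℕ∞) w)
    (huper : ∀ x, u (x + 2 * Real.pi) = u x)
    (hvper : ∀ x, v (x + 2 * Real.pi) = v x)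
    (hwper : ∀ x, w (x + 2 * Real.pi) = w x) :
    gfCocycle (vectBracket u v) w + gfCocycle (vectBracket v w) u
      + gfCocycle (vectBracket w u) v = 0 := by
  have hu : ContDiff ℝ (⊤ : ℕ∞) u := hu.of_le (by simp)
  have hv : ContDiff ℝ (⊤ : ℕ∞) v := hv.of_le (by simp)
  have hw : ContDiff ℝ (⊤ : ℕ∞) w := hw.of_le (by simp)
  have hu1 := sd hu; have hu2 := sd hu1; have hu3 := sd hu2
  have hv1 := sd hv; have hv2 := sd hv1; have hv3 := sd hv2
  have hw1 := sd hw; have hw2 := sd hw1; have hw3 := sd hw2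
  have cu := hu.continuous; have cu1 := hu1.continuous; have cu2 := hu2.continuous
  have cu3 := hu3.continuous; have cu4 := (sd hu3).continuous
  have cv := hv.continuous; have cv1 := hv1.continuous; have cv2 := hv2.continuous
  have cv3 := hv3.continuous; have cv4 := (sd hv3).continuous
  have cw := hw.continuous; have cw1 := hw1.continuous; have cw2 := hw2.continuous
  have cw3 := hw3.continuous; have cw4 := (sd hw3).continuous
  simp only [gfCocycle, d3_bracket hu hv, d3_bracket hv hw, d3_bracket hw hu]
  have cA : Continuous (fun x => (deriv (deriv (deriv (deriv u))) x * v x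
      + 2 * deriv (deriv (deriv u)) x * deriv v x
      - 2 * deriv u x * deriv (deriv (deriv v)) x
      - u x * deriv (deriv (deriv (deriv v))) x) * w x) := by fun_prop
  have cB : Continuous (fun x => (deriv (deriv (deriv (deriv v))) x * w x
      + 2 * deriv (deriv (deriv v)) x * deriv w x
      - 2 * deriv v x * deriv (deriv (deriv w)) x
      - v x * deriv (deriv (deriv (deriv w))) x) * u x) := by fun_prop
  have cC : Continuous (fun x => (deriv (deriv (deriv (deriv w))) x * u x
      + 2 * deriv (deriv (deriv w)) x * deriv u x
      - 2 * deriv w x * deriv (deriv (deriv u)) x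
      - w x * deriv (deriv (deriv (deriv u))) x) * v x) := by fun_prop
  rw [← integral_add (cA.intervalIntegrable _ _) (cB.intervalIntegrable _ _),
    ← integral_add ((cA.intervalIntegrable _ _).add (cB.intervalIntegrable _ _)) (cC.intervalIntegrable _ _)]
  have hP : ∀ x : ℝ, HasDerivAt (primF u v w)
      ((deriv (deriv (deriv (deriv u))) x * v x
      + 2 * deriv (deriv (deriv u)) x * deriv v x
      - 2 * deriv u x * deriv (deriv (deriv v)) x
      - u x * deriv (deriv (deriv (deriv v))) x) * w x
      + (deriv (deriv (deriv (deriv v))) x * w x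
      + 2 * deriv (deriv (deriv v)) x * deriv w x
      - 2 * deriv v x * deriv (deriv (deriv w)) x
      - v x * deriv (deriv (deriv (deriv w))) x) * u x
      + (deriv (deriv (deriv (deriv w))) x * u x
      + 2 * deriv (deriv (deriv w)) x * deriv u x
      - 2 * deriv w x * deriv (deriv (deriv u)) x
      - w x * deriv (deriv (deriv (deriv u))) x) * v x) x := by
    intro x
    have h := (((((((((hda hu2 x).mul (hda hv1 x)).mul (hda hw x)).sub
      (((hda hu1 x).mul (hda hv2 x)).mul (hda hw x))).add
      (((hda hu1 x).mul (hda hv x)).mul (hda hw2 x))).sub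
      (((hda hu x).mul (hda hv1 x)).mul (hda hw2 x))).add
      (((hda hu x).mul (hda hv2 x)).mul (hda hw1 x))).sub
      (((hda hu2 x).mul (hda hv x)).mul (hda hw1 x))).const_mul (2:ℝ))
    exact congr' h (by simp only [Pi.mul_apply]; ring)
  rw [integral_eq_sub_of_hasDerivAt (fun x _ => hP x)
    (((cA.add cB).add cC).intervalIntegrable _ _)]
  have key : ∀ f : ℝ → ℝ, (∀ x, f (x + 2 * Real.pi) = f x) → f (2 * Real.pi) = f 0 :=
    fun f h => by simpa using h 0
  have pu1 : ∀ x, deriv u (x + 2 * Real.pi) = deriv u x := perd huper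
  have pu2 := perd pu1
  have pv1 : ∀ x, deriv v (x + 2 * Real.pi) = deriv v x := perd hvper
  have pv2 := perd pv1
  have pw1 : ∀ x, deriv w (x + 2 * Real.pi) = deriv w x := perd hwper
  have pw2 := perd pw1
  simp only [primF]
  rw [key u huper, key v hvper, key w hwper, key _ pu1, key _ pv1, key _ pw1,
    key _ pu2, key _ pv2, key _ pw2]
  ring
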